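/- arXiv:2409.09064 — 2 statements merged into one kernel-verified Lean document; each statement's English description precedes it below -/
import Mathlib

section
/- Let p : ℕ⁺ → ℝ be a sequence of box prices with p_n ≥ 0 and ∑_{n=1}^∞ p_n = 1. Then a strategy exists if and only if there exists a permutation δ of the positive integers such that ∑_{n=1}^∞ n·p_{δ(n)} < ∞. -/
open scoped BigOperators ENNReal

/-- A permutation of the positive integers all of whose cycles (orbits) are finite. -/
def FiniteCycles (s : Equiv.Perm ℕ+) : Prop :=
  ∀ n : ℕ+, {m : ℕ+ | s.SameCycle n m}.Finite

/-- The price of the cycle of `n` under the permutation `s`, for box prices `p`. -/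
noncomputable def cyclePrice (s : Equiv.Perm ℕ+) (p : ℕ+ → ℝ) (n : ℕ+) : ℝ :=
  ∑' m : {m : ℕ+ | s.SameCycle n m}, p m

/-!
For an enumeration `e : ℕ ≃ ℕ+` put `q k = p (e k)` and let `R k = ∑_{j ≥ k} q j` be its tails;
then `∑ R k = ∑ (k + 1) q k`, so the right-hand side says that some enumeration has summable
tails.

If it does, give prisoner `e k` the amount `R k` for all `k ≥ K`, with `K` so large that these
amounts sum to less than `1`, and put the remaining mass on one prisoner. In every cycle the
prisoner of least index `k` sees the whole cycle inside the tail from `k`, and since the cycles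
are finite there are infinitely many of them.

Conversely, enumerate the prisoners so that `a` (made positive by a summable perturbation)
decreases. If the tails of `p` along this enumeration were not summable, `R k` would exceed the
amount at index `k` for infinitely many `k`, and `ℕ` could be cut into consecutive blocks, each
starting at such a `k`, whose `p`-mass exceeds the amount at its start and hence at each of its
members. Against the permutation whose cycles are these blocks only the finitely many prisoners
before the first block succeed.
-/

open Filter Function Set Topology

def IsStrategy (p a : ℕ+ → ℝ) : Prop :=
  (∀ n, 0 ≤ a n) ∧ HasSum a 1 ∧
    ∀ σ : Equiv.Perm ℕ+, FiniteCycles σ → {n : ℕ+ | cyclePrice σ p n ≤ a n}.Infinite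

noncomputable def tailSum (q : ℕ → ℝ) (k : ℕ) : ℝ :=
  ∑' j, (Ici k).indicator q j

section tailSum

variable {q : ℕ → ℝ}

theorem tailSum_nonneg (hq0 : 0 ≤ q) (k : ℕ) : 0 ≤ tailSum q k :=
  tsum_nonneg fun j => indicator_nonneg (fun j _ => hq0 j) j

theorem summable_tailSum_iff (hq0 : 0 ≤ q) (hq : Summable q) :
    Summable (tailSum q) ↔ Summable fun j : ℕ => ((j : ℝ) + 1) * q j := by
  set F : ℕ × ℕ → ℝ := fun kj => (Ici kj.1).indicator q kj.2
  have hF0 : 0 ≤ F := fun kj => indicator_nonneg (fun j _ => hq0 j) _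
  have hcol : ∀ j, ∑' k, F (k, j) = ((j : ℝ) + 1) * q j := by
    intro j
    rw [tsum_eq_sum (s := Finset.range (j + 1)) fun k hk => by simp_all [F],
      Finset.sum_congr rfl fun k hk => show F (k, j) = q j by simp_all [F]]
    simp
  calc Summable (tailSum q) ↔ Summable F :=
        ((summable_prod_of_nonneg hF0).trans (and_iff_right fun k => hq.indicator _)).symm
    _ ↔ Summable (F ∘ Prod.swap) := (Equiv.prodComm ℕ ℕ).summable_iff.symm
    _ ↔ _ := by
      rw [summable_prod_of_nonneg (f := F ∘ _) fun kj => hF0 kj.swap]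
      simp only [comp_apply, Prod.swap_prod_mk, hcol]
      exact and_iff_right fun j => summable_of_ne_finset_zero (s := Finset.range (j + 1))
        fun k hk => by simp_all [F]

theorem tendsto_sum_Ico_tailSum (hq : Summable q) (k : ℕ) :
    Tendsto (fun n => ∑ j ∈ Finset.Ico k n, q j) atTop (𝓝 (tailSum q k)) := by
  refine (hq.indicator (Ici k)).hasSum.tendsto_sum_nat.congr fun n => ?_
  rw [Finset.sum_indicator_eq_sum_filter]
  congr 1
  ext j
  simp [and_comm]

theorem exists_strictMono_lt_sum_Ico {b : ℕ → ℝ} (hq : Summable q)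
    (hG : {k | b k < tailSum q k}.Infinite) :
    ∃ g : ℕ → ℕ, StrictMono g ∧ ∀ i, b (g i) < ∑ j ∈ Finset.Ico (g i) (g (i + 1)), q j := by
  have hnext : ∀ k ∈ {k | b k < tailSum q k},
      ∃ n ∈ {k | b k < tailSum q k}, k < n ∧ b k < ∑ j ∈ Finset.Ico k n, q j := fun k hk =>
    ((Nat.frequently_atTop_iff_infinite.2 hG).and_eventually
      ((eventually_gt_atTop k).and ((tendsto_sum_Ico_tailSum hq k).eventually
        (lt_mem_nhds hk)))).exists
  choose! next hnextG hlt hsum using hnext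
  obtain ⟨k₀, hk₀⟩ := hG.nonempty
  have hmem : ∀ i, next^[i] k₀ ∈ {k | b k < tailSum q k} := by
    intro i
    induction i with
    | zero => exact hk₀
    | succ i ih => rw [iterate_succ_apply']; exact hnextG _ ih
  refine ⟨fun i => next^[i] k₀, strictMono_nat_of_lt_succ fun i => ?_, fun i => ?_⟩
  · rw [iterate_succ_apply']
    exact hlt _ (hmem i)
  · simp only [iterate_succ_apply']
    exact hsum _ (hmem i)

end tailSum

theorem infinite_setOf_lt_of_not_summable {α : Type*} {b R : α → ℝ} (hb : Summable b)
    (hR0 : 0 ≤ R) (hR : ¬Summable R) : {x | b x < R x}.Infinite := fun hfin =>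
  hR (hb.of_norm_bounded_eventually (eventually_cofinite.2 (by
    simpa [Real.norm_of_nonneg (hR0 _)] using hfin)))

theorem exists_hasSum_one_eventually_le {α : Type*} [Nonempty α] {t : α → ℝ} (ht0 : 0 ≤ t)
    (ht : Summable t) : ∃ a : α → ℝ, 0 ≤ a ∧ HasSum a 1 ∧ ∀ᶠ x in cofinite, t x ≤ a x := by
  classical
  obtain ⟨x₀⟩ := ‹Nonempty α›
  obtain ⟨s, hx₀, hs⟩ : ∃ s : Finset α, {x₀} ≤ s ∧ ∑' x : {x // x ∉ s}, t x < 1 :=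
    ((eventually_ge_atTop {x₀}).and
      ((tendsto_tsum_compl_atTop_zero t).eventually (gt_mem_nhds one_pos))).exists
  set c := ∑' x : {x // x ∉ s}, t x
  have hc : HasSum ((s : Set α)ᶜ.indicator t) c :=
    hasSum_subtype_iff_indicator.1 (ht.subtype _).hasSum
  have hsum := hc.add (hasSum_pi_single x₀ (1 - c))
  rw [add_sub_cancel] at hsum
  refine ⟨_, fun x => ?_, hsum, ?_⟩
  · refine add_nonneg (indicator_nonneg (fun x _ => ht0 x) x) ?_
    rw [Pi.single_apply]
    split_ifs <;> linarith
  · filter_upwards [s.finite_toSet.eventually_cofinite_notMem] with x hx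
    have hx₀x : x ≠ x₀ := fun h => hx (h ▸ Finset.singleton_subset_iff.1 hx₀)
    rw [indicator_of_mem hx, Pi.single_eq_of_ne hx₀x, add_zero]

theorem Equiv.Perm.infinite_setOf_forall_sameCycle_le {α β : Type*} [Infinite α] [LinearOrder β]
    {σ : Equiv.Perm α} (hσ : ∀ x, {y | σ.SameCycle x y}.Finite) (ρ : α → β) :
    {x | ∀ y, σ.SameCycle x y → ρ x ≤ ρ y}.Infinite := by
  intro hfin
  refine infinite_univ ((hfin.biUnion fun x _ => hσ x).subset fun z _ => ?_)
  obtain ⟨x, hzx, hmin⟩ := exists_min_image _ ρ (hσ z) ⟨z, SameCycle.refl σ z⟩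
  exact mem_biUnion (fun y hy => hmin y (hzx.trans hy)) (hzx.symm : σ.SameCycle x z)

theorem exists_perm_sameCycle_iff {α β : Type*} (cl : α → β) (hcl : ∀ c, (cl ⁻¹' {c}).Finite) :
    ∃ σ : Equiv.Perm α, ∀ x y, σ.SameCycle x y ↔ cl x = cl y := by
  choose f hcyc hsupp using fun c => (hcl c).countable.exists_cycleOn
  have hf : ∀ c x, cl (f c x) = cl x := by
    intro c x
    by_contra h
    have hx : f c x ≠ x := fun hx => h (by rw [hx])
    have hfx : f c (f c x) ≠ f c x := fun hx' => hx ((f c).injective hx')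
    exact h ((hsupp c hfx).trans (hsupp c hx).symm)
  have hf_symm : ∀ c x, cl ((f c).symm x) = cl x := fun c x => by
    simpa using (hf c ((f c).symm x)).symm
  let σ : Equiv.Perm α :=
    { toFun := fun x => f (cl x) x
      invFun := fun x => (f (cl x)).symm x
      left_inv := fun x => by simp [hf]
      right_inv := fun x => by simp [hf_symm] }
  have hσ : ∀ c x, cl (σ x) = c ↔ cl x = c := fun c x => by simp [σ, hf]
  have hfc : ∀ c x, cl (f c x) = c ↔ cl x = c := fun c x => by rw [hf]
  have hres : ∀ c, σ.subtypePerm (p := (cl · = c)) (hσ c) = (f c).subtypePerm (hfc c) := by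
    intro c
    ext ⟨z, hz⟩
    simp [σ, hz]
  refine ⟨σ, fun x y => ⟨fun ⟨n, hn⟩ => ?_, fun hxy => ?_⟩⟩
  · simpa [hn] using ((σ.subtypePerm (p := (cl · = cl x)) (hσ _) ^ n) ⟨x, rfl⟩).2.symm
  · have h : ((f (cl x)).subtypePerm (p := (cl · = cl x)) (hfc _)).SameCycle ⟨x, rfl⟩
        ⟨y, hxy.symm⟩ := Equiv.Perm.sameCycle_subtypePerm.2 ((hcyc _).2 rfl hxy.symm)
    rw [← hres] at h
    exact Equiv.Perm.sameCycle_subtypePerm.1 h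

theorem Summable.exists_equiv_nat_antitone {α : Type*} [Infinite α] {f : α → ℝ}
    (hf : Summable f) (hpos : ∀ x, 0 < f x) : ∃ e : ℕ ≃ α, Antitone (f ∘ e) := by
  classical
  have hfin : ∀ x, {y | f x ≤ f y}.Finite := fun x => by
    simpa using eventually_cofinite.1 (hf.tendsto_cofinite_zero.eventually (gt_mem_nhds (hpos x)))
  have hmax : ∀ s : Finset α, ∃ x ∉ s, ∀ y ∉ s, f y ≤ f x := by
    intro s
    obtain ⟨x₀, hx₀⟩ := Infinite.exists_notMem_finset s
    obtain ⟨x, hx, hxmax⟩ := ((hfin x₀).toFinset \ s).exists_max_image f ⟨x₀, by simp [hx₀]⟩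
    rw [Finset.mem_sdiff, Finite.mem_toFinset] at hx
    refine ⟨x, hx.2, fun y hy => ?_⟩
    by_cases hle : f x₀ ≤ f y
    · exact hxmax y (by simp [hle, hy])
    · exact (not_le.1 hle).le.trans hx.1
  choose pick hpick hpickmax using hmax
  let used : ℕ → Finset α := fun n => Nat.rec ∅ (fun _ s => insert (pick s) s) n
  set E : ℕ → α := fun n => pick (used n)
  have hused : ∀ n, used n = (Finset.range n).image E := by
    intro n
    induction n with
    | zero => rfl
    | succ n ih => rw [Finset.range_add_one, Finset.image_insert, ← ih]
  have hE : ∀ n y, (∀ m < n, E m ≠ y) → f y ≤ f (E n) := fun n y hy =>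
    hpickmax _ y (by rw [hused]; simpa using hy)
  have hnew : ∀ m n, m < n → E m ≠ E n := fun m n hmn h => by
    have hm : E m ∈ used n := by
      rw [hused]
      exact Finset.mem_image_of_mem E (Finset.mem_range.2 hmn)
    rw [h] at hm
    exact hpick _ hm
  have hinj : Injective E := Injective.of_lt_imp_ne hnew
  have hsurj : Surjective E := by
    intro x
    by_contra hx
    exact infinite_range_of_injective hinj
      ((hfin x).subset (by rintro _ ⟨n, rfl⟩; exact hE n x fun m _ hm => hx ⟨m, hm⟩))
  exact ⟨Equiv.ofBijective E ⟨hinj, hsurj⟩,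
    antitone_nat_of_succ_le fun n => hE n (E (n + 1)) fun m hm => hnew m (n + 1) (by omega)⟩

theorem cyclePrice_eq_sum {σ : Equiv.Perm ℕ+} {p : ℕ+ → ℝ} {x : ℕ+} {S : Finset ℕ+}
    (h : ∀ y, σ.SameCycle x y ↔ y ∈ S) : cyclePrice σ p x = ∑ y ∈ S, p y := by
  rw [cyclePrice, show {m | σ.SameCycle x m} = (S : Set ℕ+) from Set.ext h, Finset.tsum_subtype']

theorem cyclePrice_le_tailSum {p : ℕ+ → ℝ} (hp0 : ∀ n, 0 ≤ p n) (hp : Summable p) (e : ℕ ≃ ℕ+)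
    {σ : Equiv.Perm ℕ+} {x : ℕ+} (hx : ∀ y, σ.SameCycle x y → e.symm x ≤ e.symm y) :
    cyclePrice σ p x ≤ tailSum (p ∘ e) (e.symm x) := by
  have htail : tailSum (p ∘ e) (e.symm x) = ∑' y, {y | e.symm x ≤ e.symm y}.indicator p y := by
    rw [tailSum, ← e.tsum_eq]
    congr with j
    simp [indicator_apply]
  rw [cyclePrice, tsum_subtype, htail]
  exact (hp.indicator _).tsum_le_tsum (indicator_le_indicator_of_subset hx hp0) (hp.indicator _)

theorem exists_isStrategy_of_summable {p : ℕ+ → ℝ} (hp0 : ∀ n, 0 ≤ p n) (hp : Summable p)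
    {e : ℕ ≃ ℕ+} (he : Summable fun k : ℕ => ((k : ℝ) + 1) * p (e k)) : ∃ a, IsStrategy p a := by
  have hR : Summable (tailSum (p ∘ e)) :=
    (summable_tailSum_iff (fun k => hp0 _) (hp.comp_injective e.injective)).2 he
  obtain ⟨a, ha0, ha1, hle⟩ := exists_hasSum_one_eventually_le
    (fun x => tailSum_nonneg (fun k => hp0 _) (e.symm x)) (e.symm.summable_iff.2 hR)
  refine ⟨a, ha0, ha1, fun σ hσ => ?_⟩
  refine ((σ.infinite_setOf_forall_sameCycle_le hσ e.symm).sdiff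
    (eventually_cofinite.1 hle)).mono ?_
  rintro x ⟨hmin, hx⟩
  exact (cyclePrice_le_tailSum hp0 hp e hmin).trans (not_not.1 hx)

theorem summable_tailSum_of_isStrategy {p a b : ℕ+ → ℝ} (hp0 : ∀ n, 0 ≤ p n) (hp : Summable p)
    (ha : IsStrategy p a) (hab : a ≤ b) (hb : Summable b) {e : ℕ ≃ ℕ+}
    (he : Antitone (b ∘ e)) : Summable (tailSum (p ∘ e)) := by
  by_contra hR
  obtain ⟨g, hg, hblock⟩ := exists_strictMono_lt_sum_Ico (hp.comp_injective e.injective)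
    (infinite_setOf_lt_of_not_summable (e.summable_iff.2 hb)
      (tailSum_nonneg fun k => hp0 _) hR)
  -- the blocks `[0, g 0)` and `[g i, g (i + 1))` are the fibres of `cl`
  set cl : ℕ → ℕ := fun n => sInf {i | n < g i}
  have hcl_lt : ∀ n, n < g (cl n) := fun n =>
    Nat.sInf_mem (hg.tendsto_atTop.eventually_gt_atTop n).exists
  have hcl_succ : ∀ n i, cl n = i + 1 ↔ n ∈ Finset.Ico (g i) (g (i + 1)) := fun n i => by
    rw [Nat.sInf_upward_closed_eq_succ_iff fun k₁ k₂ hk h => h.trans_le (hg.monotone hk)]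
    simp [and_comm]
  have hfib : ∀ c, {x | cl (e.symm x) = c}.Finite := fun c =>
    ((finite_Iio (g c)).preimage e.symm.injective.injOn).subset fun x hx =>
      (hx : cl (e.symm x) = c) ▸ hcl_lt (e.symm x)
  obtain ⟨σ, hσ⟩ := exists_perm_sameCycle_iff (cl ∘ e.symm) hfib
  refine ha.2.2 σ (fun x => (hfib _).subset fun y hy => ((hσ x y).1 hy).symm)
    ((hfib 0).subset fun x hwin => ?_)
  by_contra h0
  obtain ⟨i, hi⟩ := Nat.exists_eq_succ_of_ne_zero h0
  have hprice : cyclePrice σ p x = ∑ y ∈ (Finset.Ico (g i) (g (i + 1))).map e.toEmbedding, p y :=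
    cyclePrice_eq_sum fun y => by
      rw [hσ, Finset.mem_map_equiv, ← hcl_succ, comp_apply, comp_apply, hi, eq_comm]
  have hgi : g i ≤ e.symm x := (Finset.mem_Ico.1 ((hcl_succ _ _).1 hi)).1
  have hwin : cyclePrice σ p x ≤ a x := hwin
  have hblock : b (e (g i)) < cyclePrice σ p x := by simpa [hprice] using hblock i
  linarith [hab x, show b x ≤ b (e (g i)) by simpa using he hgi]

theorem exists_summable_of_isStrategy {p a : ℕ+ → ℝ} (hp0 : ∀ n, 0 ≤ p n) (hp : Summable p)
    (ha : IsStrategy p a) : ∃ e : ℕ ≃ ℕ+, Summable fun k : ℕ => ((k : ℝ) + 1) * p (e k) := by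
  -- the perturbation makes `b` positive, so that its decreasing enumeration exhausts `ℕ+`
  set b : ℕ+ → ℝ := fun n => a n + (1 / 2) ^ (n : ℕ)
  have hb : Summable b :=
    ha.2.1.summable.add (summable_geometric_two.comp_injective PNat.coe_injective)
  obtain ⟨e, he⟩ := hb.exists_equiv_nat_antitone fun n =>
    add_pos_of_nonneg_of_pos (ha.1 n) (by positivity)
  exact ⟨e, (summable_tailSum_iff (fun k => hp0 _) (hp.comp_injective e.injective)).1
    (summable_tailSum_of_isStrategy hp0 hp ha (fun n => le_add_of_nonneg_right (by positivity))
      hb he)⟩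

theorem exists_perm_summable_iff (p : ℕ+ → ℝ) :
    (∃ δ : Equiv.Perm ℕ+, Summable fun n : ℕ+ => (n : ℝ) * p (δ n)) ↔
      ∃ e : ℕ ≃ ℕ+, Summable fun k : ℕ => ((k : ℝ) + 1) * p (e k) := by
  have key : ∀ e : ℕ ≃ ℕ+, Summable (fun n : ℕ+ => (n : ℝ) * p (e n.natPred)) ↔
      Summable fun k : ℕ => ((k : ℝ) + 1) * p (e k) := fun e => by
    rw [← Equiv.pnatEquivNat.symm.summable_iff]
    simp [comp_def]
  constructor
  · rintro ⟨δ, hδ⟩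
    exact ⟨Equiv.pnatEquivNat.symm.trans δ, (key _).1 (by simpa using hδ)⟩
  · rintro ⟨e, he⟩
    exact ⟨Equiv.pnatEquivNat.trans e, (key e).2 he⟩

theorem stmt_6 (p : ℕ+ → ℝ) (hp : ∀ n, 0 ≤ p n) (hpsum : HasSum p 1) :
    (∃ a : ℕ+ → ℝ, (∀ n, 0 ≤ a n) ∧ HasSum a 1 ∧
        ∀ σ : Equiv.Perm ℕ+, FiniteCycles σ →
          {n : ℕ+ | cyclePrice σ p n ≤ a n}.Infinite) ↔
      ∃ δ : Equiv.Perm ℕ+, Summable fun n : ℕ+ => (n : ℝ) * p (δ n) := by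
  rw [exists_perm_summable_iff]
  exact ⟨fun ⟨a, ha⟩ => exists_summable_of_isStrategy hp hpsum.summable ha,
    fun ⟨e, he⟩ => exists_isStrategy_of_summable hp hpsum.summable he⟩
end

section
/- For every sequence a : ℕ⁺ → ℝ there exists a finite-cycle-permutation σ of the positive integers such that the set {n : a_n < ∑_{i ∈ orbit_σ(n)} 1/i} is infinite (i.e., in Version 2.b, where the box prices are p_n = 1/n and release requires all but finitely many prisoners to find their labels, there is no strategy: for any amount distribution, infinitely many prisoners cannot afford to open all boxes of their cycle). -/
/-! The prices `p i = 1 / i` are nonnegative with divergent sum, so from every `m` one can go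
far enough, to some `N > m`, that `∑_{m ≤ i < N} p i > a m`. Iterating `m ↦ N` from `1` cuts
`ℕ+` into consecutive finite blocks `[b k, b (k + 1))`; the permutation that cycles each block
has finite cycles, and each prisoner `b k` opening a block faces a cycle whose price exceeds
his amount. -/

open scoped BigOperators ENNReal

namespace Equiv.Perm

variable {α β : Type*}

theorem sameCycle_permCongr (e : α ≃ β) (p : Perm α) {x y : β} :
    (e.permCongr p).SameCycle x y ↔ p.SameCycle (e.symm x) (e.symm y) := by
  refine exists_congr fun i => ?_
  have hpow : e.permCongr p ^ i = e.permCongr (p ^ i) := (map_zpow e.permCongrHom p i).symm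
  rw [hpow, permCongr_apply, ← eq_symm_apply]

theorem sameCycle_sigmaCongrRight {β : α → Type*} {τ : ∀ a, Perm (β a)}
    (hτ : ∀ a (u v : β a), (τ a).SameCycle u v) {x y : Σ a, β a} :
    (sigmaCongrRight τ).SameCycle x y ↔ x.1 = y.1 := by
  have hpow (i : ℤ) : sigmaCongrRight τ ^ i = sigmaCongrRight (τ ^ i) :=
    (map_zpow (sigmaCongrRightHom β) τ i).symm
  obtain ⟨a, u⟩ := x
  obtain ⟨b, v⟩ := y
  constructor
  · rintro ⟨i, hi⟩
    rw [hpow] at hi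
    exact (congrArg Sigma.fst hi :)
  · rintro (rfl : a = b)
    obtain ⟨i, hi⟩ := hτ a u v
    exact ⟨i, by rw [hpow, sigmaCongrRight_apply, Pi.pow_apply, hi]⟩

theorem sameCycle_finRotate (n : ℕ) (u v : Fin n) : (finRotate n).SameCycle u v := by
  rcases lt_or_ge n 2 with hn | hn
  · have : Subsingleton (Fin n) := Fin.subsingleton_iff_le_one.2 (by omega)
    exact Subsingleton.elim u v ▸ SameCycle.refl _ _
  · have hsupp := support_finRotate_of_le hn
    exact (isCycle_finRotate_of_le hn).sameCycle (mem_support.1 (by simp [hsupp]))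
      (mem_support.1 (by simp [hsupp]))

theorem exists_forall_sameCycle [Finite α] : ∃ σ : Perm α, ∀ x y, σ.SameCycle x y := by
  obtain ⟨n, ⟨e⟩⟩ := Finite.exists_equiv_fin α
  exact ⟨e.symm.permCongr (finRotate n), fun x y =>
    (sameCycle_permCongr _ _).2 (sameCycle_finRotate n _ _)⟩

theorem exists_sameCycle_iff (f : α → β) (hf : ∀ b, {x | f x = b}.Finite) :
    ∃ σ : Perm α, ∀ x y, σ.SameCycle x y ↔ f x = f y := by
  have (b : β) : Finite {x // f x = b} := (hf b).to_subtype
  choose τ hτ using fun b => exists_forall_sameCycle (α := {x // f x = b})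
  exact ⟨(sigmaFiberEquiv f).permCongr (sigmaCongrRight τ), fun x y => by
    rw [sameCycle_permCongr, sameCycle_sigmaCongrRight hτ]; rfl⟩

end Equiv.Perm

theorem mem_Ico_iff_nat_find_eq {α : Type*} [LinearOrder α] {b : ℕ → α} (hb : Monotone b)
    {x : α} (h : ∃ k, x < b (k + 1)) (h0 : b 0 ≤ x) {k : ℕ} :
    x ∈ Set.Ico (b k) (b (k + 1)) ↔ Nat.find h = k := by
  rw [Nat.find_eq_iff, Set.mem_Ico, and_comm]
  refine and_congr_right fun _ => ⟨fun hk j hj => not_lt.2 ((hb hj).trans hk), fun hk => ?_⟩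
  rcases k with _ | j
  · exact h0
  · exact not_lt.1 (hk j j.lt_succ_self)

theorem PNat.exists_lt_apply_succ {b : ℕ → ℕ+} (hb : StrictMono b) (n : ℕ+) :
    ∃ k, n < b (k + 1) := by
  have hid : (n : ℕ) ≤ b n := StrictMono.id_le (f := fun k => (b k : ℕ)) (fun _ _ h => hb h) n
  exact ⟨n, lt_of_le_of_lt (PNat.coe_le_coe _ _ |>.1 hid) (hb (Nat.lt_succ_self _))⟩

theorem PNat.exists_mem_Ico_of_strictMono {b : ℕ → ℕ+} (hb : StrictMono b) (h0 : b 0 = 1)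
    (n : ℕ+) : ∃ k, n ∈ Set.Ico (b k) (b (k + 1)) :=
  ⟨_, (mem_Ico_iff_nat_find_eq hb.monotone (exists_lt_apply_succ hb n) (h0 ▸ one_le)).2 rfl⟩

theorem PNat.exists_perm_setOf_sameCycle_eq_Ico {b : ℕ → ℕ+} (hb : StrictMono b)
    (h0 : b 0 = 1) :
    ∃ σ : Equiv.Perm ℕ+, ∀ n k, n ∈ Set.Ico (b k) (b (k + 1)) →
      {m | σ.SameCycle n m} = Set.Ico (b k) (b (k + 1)) := by
  set f : ℕ+ → ℕ := fun n => Nat.find (exists_lt_apply_succ hb n)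
  have hblock (n : ℕ+) (k : ℕ) : n ∈ Set.Ico (b k) (b (k + 1)) ↔ f n = k :=
    mem_Ico_iff_nat_find_eq hb.monotone _ (h0 ▸ one_le)
  obtain ⟨σ, hσ⟩ := Equiv.Perm.exists_sameCycle_iff f
    fun k => (Set.finite_Ico (b k) (b (k + 1))).subset fun n hn => (hblock n k).2 hn
  refine ⟨σ, fun n k hn => ?_⟩
  ext m
  rw [Set.mem_ofPred, hσ, (hblock n k).1 hn, hblock, eq_comm]

theorem PNat.exists_lt_sum_Ico_of_not_summable {p : ℕ+ → ℝ} (hp0 : 0 ≤ p) (hp : ¬Summable p)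
    (m : ℕ+) (c : ℝ) : ∃ N, m < N ∧ c < ∑ i ∈ Finset.Ico m N, p i := by
  obtain ⟨s, hs⟩ : ∃ s : Finset ℕ+, c + ∑ i ∈ Finset.Ico 1 m, p i < ∑ i ∈ s, p i := by
    by_contra! h
    exact hp (summable_of_sum_le hp0 h)
  obtain ⟨M, hM⟩ := s.exists_le
  set N := max M m + 1
  have hmN : m < N := PNat.lt_add_one_iff.2 (le_max_right M m)
  have hsN : s ⊆ Finset.Ico 1 N := fun i hi =>
    Finset.mem_Ico.2 ⟨one_le, PNat.lt_add_one_iff.2 ((hM i hi).trans (le_max_left M m))⟩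
  have hsplit :
      ∑ i ∈ Finset.Ico 1 N, p i = ∑ i ∈ Finset.Ico 1 m, p i + ∑ i ∈ Finset.Ico m N, p i := by
    rw [← Finset.sum_union (Finset.Ico_disjoint_Ico_consecutive 1 m N),
      Finset.Ico_union_Ico_eq_Ico one_le hmN.le]
  refine ⟨N, hmN, ?_⟩
  linarith [Finset.sum_le_sum_of_subset_of_nonneg hsN fun i _ _ => hp0 i]

theorem exists_finiteCycles_infinite_lt_cyclePrice {p : ℕ+ → ℝ} (hp0 : 0 ≤ p)
    (hp : ¬Summable p) (a : ℕ+ → ℝ) :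
    ∃ σ : Equiv.Perm ℕ+, FiniteCycles σ ∧ {n : ℕ+ | a n < cyclePrice σ p n}.Infinite := by
  choose g hg_gt hg_sum using fun m => PNat.exists_lt_sum_Ico_of_not_summable hp0 hp m (a m)
  set b : ℕ → ℕ+ := fun k => g^[k] 1
  have hb_succ (k : ℕ) : b (k + 1) = g (b k) := Function.iterate_succ_apply' g k 1
  have hb : StrictMono b := strictMono_nat_of_lt_succ fun k => hb_succ k ▸ hg_gt (b k)
  obtain ⟨σ, hσ⟩ := PNat.exists_perm_setOf_sameCycle_eq_Ico hb rfl
  refine ⟨σ, fun n => ?_, Set.infinite_of_injective_forall_mem hb.injective fun k => ?_⟩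
  · obtain ⟨k, hk⟩ := PNat.exists_mem_Ico_of_strictMono hb rfl n
    rw [hσ n k hk]
    exact Set.finite_Ico _ _
  · have hcycle := hσ (b k) k ⟨le_rfl, hb k.lt_succ_self⟩
    rw [Set.mem_ofPred, cyclePrice, tsum_congr_set_coe p hcycle, ← Finset.coe_Ico,
      Finset.tsum_subtype', hb_succ]
    exact hg_sum (b k)

theorem stmt_19 :
    ∀ a : ℕ+ → ℝ, ∃ σ : Equiv.Perm ℕ+, FiniteCycles σ ∧
      {n : ℕ+ | a n < cyclePrice σ (fun i : ℕ+ => 1 / (i : ℝ)) n}.Infinite :=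
  exists_finiteCycles_infinite_lt_cyclePrice (fun _ => by positivity)
    (summable_pnat_iff_summable_nat.not.2 Real.not_summable_one_div_natCast)
end
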